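/- arXiv:1909.09217 — 2 statements merged into one kernel-verified Lean document; each statement's English description precedes it below -/
import Mathlib

section
/- Let m, A be positive integers and a : {1,…,3m} → ℤ with 4·a(i) > A and 2·a(i) < A for all i and ∑_{i=1}^{3m} a(i) = m·A. Let δ be a real number with 0 ≤ δ < 1/2, set p_j := (⌊j/2⌋·A, (⌈j/2⌉ mod 2)·A) for j = 0,…,m, and let F := ⋃_{j=1}^{m} [p_{j−1}, p_j] ⊆ ℝ² be the zigzag polyline. The following are equivalent: (i) there exist a start point x ∈ ℝ², a permutation π of {1,…,3m}, signs ε(i) ∈ {−1,1}, orientations o(i) ∈ {e₁, e₂}, and indices 0 = k₀ ≤ k₁ ≤ ⋯ ≤ k_m = 3m such that, with steps v(i) := ε(i)·a(π(i))·o(i) and nodes x_i := x + ∑_{1 ≤ l ≤ i} v(l), one has ‖x_{k_j} − p_j‖_∞ ≤ δ for every j ∈ {0,…,m}, and additionally every point of every segment [x_{i−1}, x_i] (i = 1,…,3m) lies within ℓ∞-distance δ of some point of F; (ii) {1,…,3m} can be partitioned into m three-element sets each with a-sum A. -/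
/-- Coercion of an integer point to the real plane (with the `ℓ∞` product norm). -/
noncomputable def toR : ℤ × ℤ → ℝ × ℝ := fun p => ((p.1 : ℝ), (p.2 : ℝ))

/-!
The nodes `X (k j)` lie within `δ < 1/2` of the lattice points `p j` while the path moves by
integer vectors, so the steps between consecutive nodes sum exactly to `p (j + 1) - p j`, an
axis vector of length `A`. The functional `(u, v) ↦ u + v` reads every step `ε a e` as its
signed length `ε a`, giving signed sums `∑ ε a = ±A` over the blocks. As each `a < A/2`, every
block needs at least three steps, which forces `k j = 3 j`; and since `A/4 < a`, a signed sum of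
three lengths equals `±A` only if the signs agree and the lengths add up to `A`. Conversely, a
3-partition listed part by part traces each edge `[p j, p (j + 1)]` of the zigzag in three
monotone steps, so the path never leaves `F`. Both directions thus pass through permutations
whose consecutive triples sum to `A`, and these are 3-partitions in another guise.
-/

open Finset

lemma toR_add (u v : ℤ × ℤ) : toR (u + v) = toR u + toR v := by
  simp [toR]

lemma toR_sub (u v : ℤ × ℤ) : toR (u - v) = toR u - toR v := by
  simp [toR]

lemma toR_zsmul (c : ℤ) (w : ℤ × ℤ) : toR (c • w) = (c : ℝ) • toR w := by
  simp [toR]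

lemma eq_of_norm_toR_sub_lt_one {u v : ℤ × ℤ} (h : ‖toR u - toR v‖ < 1) : u = v := by
  rw [← toR_sub, Prod.norm_def, max_lt_iff] at h
  simp only [toR, Real.norm_eq_abs, ← Int.cast_abs, ← Int.cast_one (R := ℝ), Int.cast_lt,
    Int.abs_lt_one_iff] at h
  exact sub_eq_zero.mp (Prod.ext h.1 h.2)

lemma sub_eq_sub_of_norm_le (x : ℝ × ℝ) {u u' w w' : ℤ × ℤ} {δ : ℝ} (hδ : δ < 1 / 2)
    (h : ‖x + toR u - toR w‖ ≤ δ) (h' : ‖x + toR u' - toR w'‖ ≤ δ) : u' - u = w' - w := by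
  refine eq_of_norm_toR_sub_lt_one ?_
  calc ‖toR (u' - u) - toR (w' - w)‖
      = ‖(x + toR u' - toR w') - (x + toR u - toR w)‖ := by
        rw [toR_sub, toR_sub]; congr 1; abel
    _ ≤ ‖x + toR u' - toR w'‖ + ‖x + toR u - toR w‖ := norm_sub_le _ _
    _ < 1 := by linarith

lemma toR_add_smul_mem_segment (q w : ℤ × ℤ) {s A : ℤ} (hs : 0 ≤ s) (hsA : s ≤ A) (hA : 0 < A) :
    toR (q + s • w) ∈ segment ℝ (toR q) (toR (q + A • w)) := by
  have hA' : (0 : ℝ) < A := by exact_mod_cast hA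
  rw [segment_eq_image']
  refine ⟨s / A, ⟨by positivity, div_le_one_of_le₀ (by exact_mod_cast hsA) hA'.le⟩, ?_⟩
  simp only [toR_add, toR_zsmul, add_sub_cancel_left, smul_smul, div_mul_cancel₀ _ hA'.ne']

lemma zigzag_step {A : ℤ} {p : ℕ → ℤ × ℤ}
    (hp : ∀ j, p j = (((j / 2 : ℕ) : ℤ) * A, (((j + 1) / 2 % 2 : ℕ) : ℤ) * A)) (j : ℕ) :
    ∃ ε o, (ε = 1 ∨ ε = -1) ∧ (o = ((1, 0) : ℤ × ℤ) ∨ o = (0, 1)) ∧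
      p (j + 1) - p j = (ε * A) • o := by
  rw [hp, hp]
  rcases (by omega : ((j + 1) / 2 = j / 2 + 1 ∧ (j + 1 + 1) / 2 % 2 = (j + 1) / 2 % 2) ∨
      ((j + 1 + 1) / 2 % 2 = 1 ∧ (j + 1) / 2 % 2 = 0 ∧ (j + 1) / 2 = j / 2) ∨
      ((j + 1 + 1) / 2 % 2 = 0 ∧ (j + 1) / 2 % 2 = 1 ∧ (j + 1) / 2 = j / 2))
    with ⟨h1, h2⟩ | ⟨h1, h2, h3⟩ | ⟨h1, h2, h3⟩
  · refine ⟨1, (1, 0), .inl rfl, .inl rfl, ?_⟩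
    rw [h2, h1]
    ext <;> simp
    ring
  · exact ⟨1, (0, 1), .inl rfl, .inr rfl, by rw [h1, h2, h3]; simp⟩
  · exact ⟨-1, (0, 1), .inr rfl, .inr rfl, by rw [h1, h2, h3]; simp⟩

lemma fst_add_snd_smul_basis (c : ℤ) {o : ℤ × ℤ} (ho : o = (1, 0) ∨ o = (0, 1)) :
    (c • o).1 + (c • o).2 = c := by
  rcases ho with rfl | rfl <;> simp

def finIco {n : ℕ} (t t' : ℕ) : Finset (Fin n) := univ.filter fun i => t ≤ (i : ℕ) ∧ (i : ℕ) < t'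

lemma mem_finIco {n t t' : ℕ} {i : Fin n} : i ∈ finIco t t' ↔ t ≤ (i : ℕ) ∧ (i : ℕ) < t' := by
  simp [finIco]

lemma card_finIco {n t t' : ℕ} (h : t' ≤ n) : (finIco t t' : Finset (Fin n)).card = t' - t := by
  rw [← Nat.card_Ico, ← card_map Fin.valEmbedding]
  congr 1
  ext i
  simp only [mem_map, mem_finIco, Fin.valEmbedding_apply, mem_Ico]
  exact ⟨by rintro ⟨i, hi, rfl⟩; exact hi, fun hi => ⟨⟨i, by omega⟩, hi, rfl⟩⟩

section PartialSum

variable {M : Type*} [AddCommMonoid M] {n : ℕ}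

def partialSum (v : Fin n → M) (t : ℕ) : M :=
  ∑ i ∈ univ.filter (fun i : Fin n => (i : ℕ) < t), v i

lemma partialSum_zero (v : Fin n → M) : partialSum v 0 = 0 := by
  simp [partialSum]

lemma partialSum_eq_add (v : Fin n → M) {t t' : ℕ} (h : t ≤ t') :
    partialSum v t' = partialSum v t + ∑ i ∈ finIco t t', v i := by
  rw [partialSum, partialSum, ← sum_filter_add_sum_filter_not _ fun i : Fin n => (i : ℕ) < t,
    filter_filter, filter_filter]
  congr 2 <;> ext i <;> simp only [mem_filter, mem_univ, true_and, mem_finIco] <;> omega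

end PartialSum

lemma three_le_card_of_le_abs_sum {ι : Type*} {s : Finset ι} {c : ι → ℤ} {A : ℤ}
    (hA0 : 0 < A) (hc : ∀ i ∈ s, 2 * |c i| < A) (hA : A ≤ |∑ i ∈ s, c i|) : 3 ≤ s.card := by
  by_contra! hs
  have hsum : ∑ i ∈ s, 2 * |c i| ≤ ∑ _i ∈ s, (A - 1) :=
    sum_le_sum fun i hi => by have := hc i hi; omega
  rw [← mul_sum, sum_const, nsmul_eq_mul] at hsum
  have hcard : (s.card : ℤ) ≤ 2 := by exact_mod_cast Nat.le_of_lt_succ hs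
  have := mul_le_mul_of_nonneg_right hcard (by omega : (0 : ℤ) ≤ A - 1)
  linarith [abs_sum_le_sum_abs c s]

lemma sum_eq_of_abs_sum_signed_eq {ι : Type*} [DecidableEq ι] {s : Finset ι} (hs : s.card = 3)
    {A : ℤ} {b ε : ι → ℤ} (h4 : ∀ i, A < 4 * b i) (h2 : ∀ i, 2 * b i < A)
    (hε : ∀ i, ε i = 1 ∨ ε i = -1) (h : |∑ i ∈ s, ε i * b i| = A) : ∑ i ∈ s, b i = A := by
  obtain ⟨x, y, z, hxy, hxz, hyz, rfl⟩ := card_eq_three.mp hs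
  simp only [sum_insert, mem_insert, mem_singleton, hxy, hxz, hyz, not_false_eq_true,
    or_self, sum_singleton] at h ⊢
  have := h4 x; have := h4 y; have := h4 z; have := h2 x; have := h2 y; have := h2 z
  rcases hε x with hx | hx <;> rcases hε y with hy | hy <;> rcases hε z with hz | hz <;>
    rw [hx, hy, hz] at h <;> rcases abs_cases (_ : ℤ) with ⟨habs, -⟩ | ⟨habs, -⟩ <;>
    rw [habs] at h <;> omega

lemma eq_mul_of_add_le {m c : ℕ} {k : Fin (m + 1) → ℕ}
    (hlast : k (Fin.last m) = c * m) (hgap : ∀ j : Fin m, k j.castSucc + c ≤ k j.succ)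
    (j : Fin (m + 1)) : k j = c * j := by
  have hlow : ∀ j : Fin (m + 1), c * j ≤ k j := by
    refine Fin.induction (by simp) fun j ih => ?_
    have := hgap j
    simp only [Fin.val_succ, Fin.val_castSucc] at ih ⊢
    nlinarith
  have hhigh : ∀ j : Fin (m + 1), k j + c * (m - j) ≤ c * m := by
    refine Fin.reverseInduction (by simp [hlast]) fun j ih => ?_
    have := hgap j
    simp only [Fin.val_succ, Fin.val_castSucc] at ih ⊢
    rw [show m - j = m - (j + 1) + 1 by omega, Nat.mul_succ]
    omega
  have hsplit : c * m = c * j + c * (m - j) := by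
    rw [← Nat.mul_add, Nat.add_sub_cancel' (by omega)]
  linarith [hlow j, hhigh j]

lemma mem_finIco_mul_iff {n k j : ℕ} (hk : 0 < k) {i : Fin n} :
    i ∈ finIco (k * j) (k * j + k) ↔ (i : ℕ) / k = j := by
  rw [mem_finIco, Nat.div_eq_iff hk, Nat.mul_comm j k]
  omega

lemma exists_perm_of_finpartition {k m : ℕ} (P : Finpartition (univ : Finset (Fin (k * m))))
    (hm : P.parts.card = m) (hk : ∀ q ∈ P.parts, q.card = k) :
    ∃ π : Equiv.Perm (Fin (k * m)),
      ∀ j : Fin m, (finIco (k * j) (k * j + k)).map π.toEmbedding ∈ P.parts := by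
  let e : Fin m ≃ P.parts := (Fintype.equivFinOfCardEq (by simpa using hm)).symm
  let f : ∀ j, Fin k ≃ (e j).1 := fun j =>
    (Fintype.equivFinOfCardEq (by simpa using hk _ (e j).2)).symm
  -- `ψ (j, r)` is the `r`-th element of the `j`-th part.
  let ψ : Fin m × Fin k ≃ Fin (k * m) :=
    (Equiv.sigmaEquivProd _ _).symm.trans ((Equiv.sigmaCongr e f).trans
      (P.equivSigmaParts.symm.trans (Equiv.subtypeUnivEquiv mem_univ)))
  have hψ : ∀ x, ψ x ∈ (e x.1).1 := fun x => (f x.1 x.2).2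
  let ι : Fin m × Fin k ≃ Fin (k * m) := finProdFinEquiv.trans (finCongr (Nat.mul_comm m k))
  refine ⟨ι.symm.trans ψ, fun j => ?_⟩
  convert (e j).2
  apply eq_of_subset_of_card_le
  · intro y hy
    obtain ⟨i, hi, rfl⟩ := mem_map.mp hy
    obtain ⟨x, rfl⟩ := ι.surjective i
    have hx : x.1 = j := by
      rw [mem_finIco_mul_iff x.2.pos] at hi
      ext
      rw [← hi]
      simp [ι, Nat.add_mul_div_left _ _ x.2.pos, Nat.div_eq_of_lt x.2.isLt]
    simpa [hx] using hψ x
  · rw [card_map, card_finIco (by nlinarith [j.isLt]), hk _ (e j).2]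
    omega

theorem exists_finpartition_iff_exists_perm {k m : ℕ} (hk : 0 < k)
    (Q : Finset (Fin (k * m)) → Prop) :
    (∃ P : Finpartition (univ : Finset (Fin (k * m))),
        P.parts.card = m ∧ ∀ q ∈ P.parts, q.card = k ∧ Q q) ↔
      ∃ π : Equiv.Perm (Fin (k * m)),
        ∀ j < m, Q ((finIco (k * j) (k * j + k)).map π.toEmbedding) := by
  constructor
  · rintro ⟨P, hm, hP⟩
    obtain ⟨π, hπ⟩ := exists_perm_of_finpartition P hm fun q hq => (hP q hq).1
    exact ⟨π, fun j hj => (hP _ (hπ ⟨j, hj⟩)).2⟩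
  rintro ⟨π, hπ⟩
  set B : ℕ → Finset (Fin (k * m)) := fun j => (finIco (k * j) (k * j + k)).map π.toEmbedding
  have hB {i j} : i ∈ B j ↔ (π.symm i : ℕ) / k = j := by
    simp [B, mem_finIco_mul_iff hk]
  have hlt {j} (hj : j < m) : k * j < k * m := Nat.mul_lt_mul_of_pos_left hj hk
  have hcorner {j} (hj : j < m) : π ⟨k * j, hlt hj⟩ ∈ B j := by
    simp [hB, Nat.mul_div_cancel_left _ hk]
  have hunique : ∀ i ∈ univ, ∃! t, t ∈ (range m).image B ∧ i ∈ t := by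
    intro i _
    have hi : (π.symm i : ℕ) / k < m :=
      (Nat.div_lt_iff_lt_mul hk).2 (Nat.mul_comm k m ▸ (π.symm i).isLt)
    refine ⟨B ((π.symm i : ℕ) / k), ⟨mem_image_of_mem _ (mem_range.2 hi), hB.2 rfl⟩, ?_⟩
    rintro t ⟨ht, hit⟩
    obtain ⟨j, -, rfl⟩ := mem_image.1 ht
    rw [hB.1 hit]
  have hempty : ∅ ∉ (range m).image B := by
    intro h
    obtain ⟨j, hj, hBj⟩ := mem_image.1 h
    simpa [hBj] using hcorner (mem_range.1 hj)
  refine ⟨.ofExistsUnique _ (fun _ _ => subset_univ _) hunique hempty, ?_, ?_⟩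
  · rw [Finpartition.ofExistsUnique_parts, card_image_of_injOn, card_range]
    intro j hj j' _ hjj'
    have := hcorner (mem_range.1 hj)
    rwa [hjj', hB, Equiv.symm_apply_apply, Nat.mul_div_cancel_left _ hk] at this
  · intro q hq
    obtain ⟨j, hj, rfl⟩ := mem_image.1 hq
    refine ⟨?_, hπ j (mem_range.1 hj)⟩
    rw [card_map, card_finIco (by nlinarith [mem_range.1 hj])]
    omega

theorem sum_triples_eq_of_path {m : ℕ} {A : ℤ} (hA : 0 < A) {a : Fin (3 * m) → ℤ}
    (h4 : ∀ i, A < 4 * a i) (h2 : ∀ i, 2 * a i < A) {δ : ℝ} (hδ : δ < 1 / 2)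
    {p : ℕ → ℤ × ℤ}
    (hp : ∀ j, p j = (((j / 2 : ℕ) : ℤ) * A, (((j + 1) / 2 % 2 : ℕ) : ℤ) * A))
    {x : ℝ × ℝ} {π : Equiv.Perm (Fin (3 * m))} {ε : Fin (3 * m) → ℤ}
    {o : Fin (3 * m) → ℤ × ℤ} {k : Fin (m + 1) → ℕ}
    (hε : ∀ i, ε i = 1 ∨ ε i = -1) (ho : ∀ i, o i = (1, 0) ∨ o i = (0, 1))
    (hk : Monotone k) (hklast : k (Fin.last m) = 3 * m)
    (hnode : ∀ j : Fin (m + 1),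
      ‖x + toR (partialSum (fun i => (ε i * a (π i)) • o i) (k j)) - toR (p j)‖ ≤ δ) :
    ∀ j < m, ∑ i ∈ finIco (3 * j) (3 * j + 3), a (π i) = A := by
  set v : Fin (3 * m) → ℤ × ℤ := fun i => (ε i * a (π i)) • o i
  have hstep (j : Fin m) : ∑ i ∈ finIco (k j.castSucc) (k j.succ), v i = p (j + 1) - p j := by
    rw [eq_sub_of_add_eq' (partialSum_eq_add v (hk (Fin.castSucc_le_succ j))).symm]
    have hsucc := hnode j.succ
    rw [Fin.val_succ] at hsucc
    exact sub_eq_sub_of_norm_le x hδ (hnode j.castSucc) hsucc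
  have hsigned (j : Fin m) :
      |∑ i ∈ finIco (k j.castSucc) (k j.succ), ε i * a (π i)| = A := by
    obtain ⟨η, u, hη, hu, hpu⟩ := zigzag_step hp j
    have := congrArg (fun w : ℤ × ℤ => w.1 + w.2) ((hstep j).trans hpu)
    simp only [Prod.fst_sum, Prod.snd_sum, ← sum_add_distrib, v,
      fst_add_snd_smul_basis _ (ho _), fst_add_snd_smul_basis _ hu] at this
    rw [this]
    rcases hη with rfl | rfl <;> simp [abs_of_pos hA]
  have hgap (j : Fin m) : k j.castSucc + 3 ≤ k j.succ := by
    have h3 := three_le_card_of_le_abs_sum hA (fun i _ => ?_) (hsigned j).ge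
    · rw [card_finIco (hklast ▸ hk (Fin.le_last _))] at h3
      omega
    have := h2 (π i)
    rcases hε i with h | h <;> simp [h, abs_of_pos (by linarith [h4 (π i)] : 0 < a (π i)), this]
  intro j hj
  have hkj := eq_mul_of_add_le hklast hgap
  have hj3 := hsigned ⟨j, hj⟩
  simp only [hkj, Fin.val_castSucc, Fin.val_succ, Nat.mul_succ] at hj3
  have hcard : (finIco (3 * j) (3 * j + 3) : Finset (Fin (3 * m))).card = 3 := by
    rw [card_finIco (by omega)]
    omega
  exact sum_eq_of_abs_sum_signed_eq hcard (fun i => h4 (π i)) (fun i => h2 (π i)) hε hj3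

theorem exists_path_of_sum_triples_eq {m : ℕ} {A : ℤ} (hA : 0 < A) {a : Fin (3 * m) → ℤ}
    (ha : ∀ i, 0 < a i) {p : ℕ → ℤ × ℤ}
    (hp : ∀ j, p j = (((j / 2 : ℕ) : ℤ) * A, (((j + 1) / 2 % 2 : ℕ) : ℤ) * A))
    {π : Equiv.Perm (Fin (3 * m))}
    (hπ : ∀ j < m, ∑ i ∈ finIco (3 * j) (3 * j + 3), a (π i) = A) :
    ∃ (ε : Fin (3 * m) → ℤ) (o : Fin (3 * m) → ℤ × ℤ),
      (∀ i, ε i = 1 ∨ ε i = -1) ∧ (∀ i, o i = (1, 0) ∨ o i = (0, 1)) ∧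
      (∀ j ≤ m, partialSum (fun i => (ε i * a (π i)) • o i) (3 * j) = p j) ∧
      ∀ t < 3 * m, segment ℝ (toR (partialSum (fun i => (ε i * a (π i)) • o i) t))
          (toR (partialSum (fun i => (ε i * a (π i)) • o i) (t + 1))) ⊆
        segment ℝ (toR (p (t / 3))) (toR (p (t / 3 + 1))) := by
  choose η u hη hu hpu using zigzag_step hp
  refine ⟨fun i => η (i / 3), fun i => u (i / 3), fun i => hη _, fun i => hu _, ?_⟩
  set v : Fin (3 * m) → ℤ × ℤ := fun i => (η (i / 3) * a (π i)) • u (i / 3)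
  have hnext (j : ℕ) : p (j + 1) = p j + A • η j • u j := by
    rw [← sub_eq_iff_eq_add', hpu, smul_smul, mul_comm]
  have hblock {j r : ℕ} (hr : r ≤ 3) :
      ∑ i ∈ finIco (3 * j) (3 * j + r), v i =
        (∑ i ∈ finIco (3 * j) (3 * j + r), a (π i)) • η j • u j := by
    rw [sum_smul]
    refine sum_congr rfl fun i hi => ?_
    rw [mem_finIco] at hi
    simp only [v, show (i : ℕ) / 3 = j by omega, smul_smul, mul_comm]
  have hcorner : ∀ j ≤ m, partialSum v (3 * j) = p j := by
    intro j
    induction j with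
    | zero => intro; rw [Nat.mul_zero, partialSum_zero, hp]; ext <;> simp
    | succ j ih =>
      intro hj
      rw [Nat.mul_succ, partialSum_eq_add v (Nat.le_add_right _ 3),
        hblock le_rfl, hπ j hj, ih (by omega), hnext]
  have hmid {j r : ℕ} (hj : j < m) (hr : r ≤ 3) :
      toR (partialSum v (3 * j + r)) ∈ segment ℝ (toR (p j)) (toR (p (j + 1))) := by
    rw [partialSum_eq_add v (Nat.le_add_right _ r), hblock hr, hcorner j hj.le, hnext]
    refine toR_add_smul_mem_segment _ _ (sum_nonneg fun i _ => (ha _).le) ?_ hA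
    rw [← hπ j hj]
    exact sum_le_sum_of_subset_of_nonneg (fun i => by simp only [mem_finIco]; omega)
      fun i _ _ => (ha _).le
  refine ⟨hcorner, fun t ht => (convex_segment _ _).segment_subset ?_ ?_⟩
  · simpa [Nat.div_add_mod] using hmid (j := t / 3) (r := t % 3) (by omega) (by omega)
  · simpa [show 3 * (t / 3) + (t % 3 + 1) = t + 1 by omega] using
      hmid (j := t / 3) (r := t % 3 + 1) (by omega) (by omega)

theorem stmt_7_general (m : ℕ) (A : ℤ) (hA : 0 < A)
    (a : Fin (3 * m) → ℤ)
    (h4 : ∀ i, 4 * a i > A) (h2 : ∀ i, 2 * a i < A)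
    (δ : ℝ) (hδ0 : 0 ≤ δ) (hδ : δ < 1 / 2)
    (p : ℕ → ℤ × ℤ)
    (hp : ∀ j, p j = (((j / 2 : ℕ) : ℤ) * A, (((j + 1) / 2 % 2 : ℕ) : ℤ) * A))
    (F : Set (ℝ × ℝ))
    (hF : F = ⋃ j ∈ Finset.Icc 1 m, segment ℝ (toR (p (j - 1))) (toR (p j))) :
    (∃ (x : ℝ × ℝ) (π : Equiv.Perm (Fin (3 * m))) (ε : Fin (3 * m) → ℤ)
        (o : Fin (3 * m) → ℤ × ℤ) (k : Fin (m + 1) → ℕ) (X : ℕ → ℝ × ℝ),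
      (∀ i, ε i = 1 ∨ ε i = -1) ∧
      (∀ i, o i = (1, 0) ∨ o i = (0, 1)) ∧
      (∀ t : ℕ, X t = x + toR (∑ i ∈ Finset.univ.filter
          (fun i : Fin (3 * m) => (i : ℕ) < t), (ε i * a (π i)) • o i)) ∧
      Monotone k ∧ k 0 = 0 ∧ k (Fin.last m) = 3 * m ∧
      (∀ j : Fin (m + 1), ‖X (k j) - toR (p (j : ℕ))‖ ≤ δ) ∧
      (∀ i : ℕ, 1 ≤ i → i ≤ 3 * m →
        ∀ y ∈ segment ℝ (X (i - 1)) (X i), ∃ z ∈ F, ‖y - z‖ ≤ δ)) ↔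
    (∃ P : Finpartition (Finset.univ : Finset (Fin (3 * m))),
      P.parts.card = m ∧ ∀ q ∈ P.parts, q.card = 3 ∧ ∑ i ∈ q, a i = A) := by
  rw [exists_finpartition_iff_exists_perm (by norm_num) fun q => ∑ i ∈ q, a i = A]
  simp only [sum_map, Equiv.coe_toEmbedding]
  constructor
  · rintro ⟨x, π, ε, o, k, X, hε, ho, hX, hk, -, hklast, hnode, -⟩
    exact ⟨π, sum_triples_eq_of_path hA h4 h2 hδ hp hε ho hk hklast fun j => hX (k j) ▸ hnode j⟩
  rintro ⟨π, hπ⟩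
  obtain ⟨ε, o, hε, ho, hcorner, hseg⟩ :=
    exists_path_of_sum_triples_eq hA (fun i => by linarith [h4 i, h2 i]) hp hπ
  refine ⟨0, π, ε, o, fun j => 3 * j, fun t => toR (partialSum _ t), hε, ho,
    fun t => (zero_add _).symm, fun j j' h => Nat.mul_le_mul_left 3 h, rfl, rfl,
    fun j => ?_, fun i hi1 hi2 y hy => ⟨y, ?_, by simpa using hδ0⟩⟩
  · dsimp only
    rw [hcorner j (by omega), sub_self, norm_zero]
    exact hδ0
  · have hi : i - 1 + 1 = i := Nat.sub_add_cancel hi1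
    rw [hF]
    refine Set.mem_iUnion₂.2 ⟨(i - 1) / 3 + 1, mem_Icc.2 ⟨by omega, by omega⟩, ?_⟩
    rw [Nat.add_sub_cancel]
    exact hseg (i - 1) (by omega) (by rwa [hi])

/-- Corridor variant of the DPA-S hardness reduction (Corollary 1): an
axis-aligned path using each strut length `a i` exactly once, whose nodes
`X (k j)` lie in the `δ`-boxes (`δ < 1/2`, `ℓ∞`-norm) of the turning points
`p j = (⌊j/2⌋·A, (⌈j/2⌉ mod 2)·A)` of the zigzag polyline `F` and all of
whose segments stay within `ℓ∞`-distance `δ` of `F`, exists iff `Fin (3m)`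
can be partitioned into `m` three-element sets each with `a`-sum `A`.
(Steps are indexed 0-based: `X t` is the node after the first `t` steps.) -/
theorem stmt_7 (m : ℕ) (hm : 0 < m) (A : ℤ) (hA : 0 < A)
    (a : Fin (3 * m) → ℤ)
    (h4 : ∀ i, 4 * a i > A) (h2 : ∀ i, 2 * a i < A)
    (hsum : ∑ i, a i = (m : ℤ) * A)
    (δ : ℝ) (hδ0 : 0 ≤ δ) (hδ : δ < 1 / 2)
    (p : ℕ → ℤ × ℤ)
    (hp : ∀ j, p j = (((j / 2 : ℕ) : ℤ) * A, (((j + 1) / 2 % 2 : ℕ) : ℤ) * A))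
    (F : Set (ℝ × ℝ))
    (hF : F = ⋃ j ∈ Finset.Icc 1 m, segment ℝ (toR (p (j - 1))) (toR (p j))) :
    (∃ (x : ℝ × ℝ) (π : Equiv.Perm (Fin (3 * m))) (ε : Fin (3 * m) → ℤ)
        (o : Fin (3 * m) → ℤ × ℤ) (k : Fin (m + 1) → ℕ) (X : ℕ → ℝ × ℝ),
      (∀ i, ε i = 1 ∨ ε i = -1) ∧
      (∀ i, o i = (1, 0) ∨ o i = (0, 1)) ∧
      (∀ t : ℕ, X t = x + toR (∑ i ∈ Finset.univ.filter
          (fun i : Fin (3 * m) => (i : ℕ) < t), (ε i * a (π i)) • o i)) ∧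
      Monotone k ∧ k 0 = 0 ∧ k (Fin.last m) = 3 * m ∧
      (∀ j : Fin (m + 1), ‖X (k j) - toR (p (j : ℕ))‖ ≤ δ) ∧
      (∀ i : ℕ, 1 ≤ i → i ≤ 3 * m →
        ∀ y ∈ segment ℝ (X (i - 1)) (X i), ∃ z ∈ F, ‖y - z‖ ≤ δ)) ↔
    (∃ P : Finpartition (Finset.univ : Finset (Fin (3 * m))),
      P.parts.card = m ∧ ∀ q ∈ P.parts, q.card = 3 ∧ ∑ i ∈ q, a i = A) :=
  stmt_7_general m A hA a h4 h2 δ hδ0 hδ p hp F hF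
end

section
/- Let m, A be positive integers and a : {1,…,3m} → ℤ with 4·a(i) > A and 2·a(i) < A for all i and ∑_{i=1}^{3m} a(i) = m·A. Let δ be a real number with 0 ≤ δ < 1/2 and set p_j := (⌊j/2⌋·A, (⌈j/2⌉ mod 2)·A) for j = 0,…,m. The following are equivalent: (i) there exist a permutation π of {1,…,3m}, signs ε(i) ∈ {−1,1}, orientations o(i) ∈ {e₁, e₂}, and indices 0 = k₀ ≤ k₁ ≤ ⋯ ≤ k_m = 3m such that, with steps v(i) := ε(i)·a(π(i))·o(i) and nodes x_i := p₀ + ∑_{1 ≤ l ≤ i} v(l), one has x_{3m} = p_m (exact endpoints) and ‖x_{k_j} − p_j‖_∞ ≤ δ for every j ∈ {1,…,m−1}; (ii) {1,…,3m} can be partitioned into m three-element sets each with a-sum A. -/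
/-! Integer points at `ℓ∞`-distance at most `δ < 1/2` from the integer turning points coincide
with them, so the path passes exactly through every `p j`, and the steps taken between two
consecutive turning points sum to `p (j + 1) - p j = ±A • e` for an axis `e`. The steps along `e`
in such a segment sum to `±A` while each is shorter than `A / 2`, so every segment has at least
three steps; as there are only `3m` steps, every segment has exactly three, all along `e`, and
three numbers of absolute value below `A / 2` summing to `±A` have a common sign, so the three
lengths sum to `A`. Conversely, laying out the triples of a 3-partition one after another and
walking the `j`-th triple in the direction of `p (j + 1) - p j` traces the zigzag exactly. -/

open Finset

section OrderedRing

variable {ι R : Type*} [CommRing R] [LinearOrder R] [IsStrictOrderedRing R]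
  {T : Finset ι} {c : ι → R} {A : R}

theorem two_lt_card_of_le_abs_sum (hA : 0 < A) (hc : ∀ i ∈ T, 2 * |c i| < A)
    (hsum : A ≤ |∑ i ∈ T, c i|) : 2 < #T := by
  have hT : T.Nonempty := by
    by_contra hT
    rw [not_nonempty_iff_eq_empty.mp hT, sum_empty, abs_zero] at hsum
    exact hsum.not_gt hA
  have : 2 * A < #T * A := calc
    2 * A ≤ 2 * |∑ i ∈ T, c i| := by gcongr
    _ ≤ ∑ i ∈ T, 2 * |c i| := by rw [← mul_sum]; gcongr; exact abs_sum_le_sum_abs c T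
    _ < ∑ _i ∈ T, A := sum_lt_sum_of_nonempty hT hc
    _ = #T * A := by rw [sum_const, nsmul_eq_mul]
  exact_mod_cast lt_of_mul_lt_mul_right this hA.le

theorem nonneg_of_card_eq_three (hT : #T = 3) (hc : ∀ i ∈ T, 2 * |c i| < ∑ i ∈ T, c i) :
    ∀ i ∈ T, 0 ≤ c i := by
  classical
  intro i hi
  by_contra! hneg
  have hrest : ∑ j ∈ T.erase i, 2 * |c j| < ∑ _j ∈ T.erase i, ∑ j ∈ T, c j :=
    sum_lt_sum_of_nonempty (by rw [← card_pos, card_erase_of_mem hi, hT]; norm_num)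
      fun j hj => hc j (mem_of_mem_erase hj)
  rw [sum_const, card_erase_of_mem hi, hT, ← mul_sum, show 3 - 1 = 2 from rfl, two_nsmul,
    ← two_mul] at hrest
  have hle : ∑ j ∈ T.erase i, c j ≤ ∑ j ∈ T.erase i, |c j| := sum_le_sum fun j _ => le_abs_self _
  have hsplit := add_sum_erase T c hi
  linarith [lt_of_mul_lt_mul_left hrest zero_le_two]

theorem sum_abs_eq_of_card_eq_three (hT : #T = 3) (hc : ∀ i ∈ T, 2 * |c i| < |∑ i ∈ T, c i|) :
    ∑ i ∈ T, |c i| = |∑ i ∈ T, c i| := by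
  rcases le_total 0 (∑ i ∈ T, c i) with hpos | hneg
  · rw [abs_of_nonneg hpos] at hc ⊢
    exact sum_congr rfl fun i hi => abs_of_nonneg (nonneg_of_card_eq_three hT hc i hi)
  · have hc' : ∀ i ∈ T, 2 * |-c i| < ∑ i ∈ T, -c i := by
      simpa only [abs_neg, sum_neg_distrib, abs_of_nonpos hneg] using hc
    rw [abs_of_nonpos hneg, ← sum_neg_distrib]
    exact sum_congr rfl fun i hi =>
      abs_of_nonpos (neg_nonneg.mp (nonneg_of_card_eq_three hT hc' i hi))

end OrderedRing

section Steps

variable {N : ℕ}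

def stepsIco (s t : ℕ) : Finset (Fin N) := univ.filter fun i => s ≤ (i : ℕ) ∧ (i : ℕ) < t

def prefixSum {M : Type*} [AddCommMonoid M] (v : Fin N → M) (t : ℕ) : M :=
  ∑ i ∈ univ.filter (fun i : Fin N => (i : ℕ) < t), v i

theorem card_stepsIco {s t : ℕ} (ht : t ≤ N) : #(stepsIco s t : Finset (Fin N)) = t - s := by
  have : (stepsIco s t : Finset (Fin N)).map Fin.valEmbedding = Ico s t := by
    ext x
    simp only [stepsIco, mem_map, mem_filter, mem_univ, true_and, Fin.valEmbedding_apply, mem_Ico]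
    exact ⟨fun ⟨i, hi, hx⟩ => hx ▸ hi, fun hx => ⟨⟨x, by omega⟩, hx, rfl⟩⟩
  rw [← card_map, this, Nat.card_Ico]

variable {M : Type*} [AddCommMonoid M] (v : Fin N → M)

@[simp]
theorem prefixSum_zero : prefixSum v 0 = 0 := by
  simp [prefixSum]

theorem prefixSum_add_sum_stepsIco {s t : ℕ} (hst : s ≤ t) :
    prefixSum v s + ∑ i ∈ stepsIco s t, v i = prefixSum v t := by
  classical
  rw [prefixSum, prefixSum, stepsIco, ← sum_union]
  · congr 1
    ext i
    simp only [mem_union, mem_filter, mem_univ, true_and]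
    omega
  · simp only [disjoint_left, mem_filter, mem_univ, true_and]
    omega

end Steps

def blockIdx {n m : ℕ} (i : Fin (n * m)) : Fin m := ⟨i / n, Nat.div_lt_of_lt_mul i.isLt⟩

theorem filter_blockIdx_eq {n m : ℕ} (j : Fin m) :
    univ.filter (fun i : Fin (n * m) => blockIdx i = j) = stepsIco (n * j) (n * j + n) := by
  ext i
  simp only [blockIdx, stepsIco, mem_filter, mem_univ, true_and, Fin.ext_iff]
  rcases Nat.eq_zero_or_pos n with rfl | hn
  · exact absurd i.isLt (by simp)
  · rw [le_antisymm_iff, Nat.le_div_iff_mul_le hn, ← Nat.lt_succ_iff, Nat.div_lt_iff_lt_mul hn]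
    constructor <;> rintro ⟨h1, h2⟩ <;> constructor <;> linarith

theorem card_filter_blockIdx_eq {n m : ℕ} (j : Fin m) :
    #(univ.filter (fun i : Fin (n * m) => blockIdx i = j)) = n := by
  rw [filter_blockIdx_eq, card_stepsIco (by rw [← mul_add_one]; exact Nat.mul_le_mul_left _ j.isLt),
    Nat.add_sub_cancel_left]

theorem Fin.eq_mul_of_add_le_succ {m n : ℕ} {k : Fin (m + 1) → ℕ}
    (hlast : k (Fin.last m) ≤ n * m) (hstep : ∀ j : Fin m, k j.castSucc + n ≤ k j.succ)
    (j : Fin (m + 1)) : k j = n * j := by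
  have hlow : ∀ j : Fin (m + 1), n * j ≤ k j := by
    intro j
    induction j using Fin.induction with
    | zero => simp
    | succ j ih =>
      have := hstep j
      rw [Fin.val_succ, mul_add_one]
      rw [Fin.val_castSucc] at ih
      omega
  have hup : ∀ j : Fin (m + 1), k j + n * (m - j) ≤ k (Fin.last m) := by
    intro j
    induction j using Fin.reverseInduction with
    | last => simp
    | cast j ih =>
      have := hstep j
      rw [Fin.val_succ] at ih
      rw [Fin.val_castSucc, show m - j = (m - (j + 1)) + 1 by omega, mul_add_one]
      omega
  have : n * j + n * (m - j) = n * m := by rw [← mul_add, Nat.add_sub_cancel' (by omega)]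
  linarith [hlow j, hup j]

theorem exists_equiv_comp_eq_of_card_fiber_eq {α β γ : Type*} [Fintype α] [Fintype β]
    [DecidableEq γ] {f : α → γ} {g : β → γ}
    (h : ∀ c, #(univ.filter (f · = c)) = #(univ.filter (g · = c))) :
    ∃ e : α ≃ β, ∀ x, g (e x) = f x :=
  ⟨Equiv.ofFiberEquiv fun c =>
      Fintype.equivOfCardEq (by simpa only [Fintype.card_subtype] using h c),
    Equiv.ofFiberEquiv_map _⟩

theorem Finpartition.exists_parts_eq_image_fiber {α ι : Type*} [Fintype α] [DecidableEq α]
    [Fintype ι] [DecidableEq ι] {g : α → ι} (hg : Function.Surjective g) :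
    ∃ P : Finpartition (univ : Finset α), P.parts = univ.image fun j => univ.filter (g · = j) := by
  refine ⟨Finpartition.ofExistsUnique (univ.image fun j => univ.filter (g · = j))
    (fun _ _ => subset_univ _) (fun x _ => ⟨univ.filter (g · = g x), by simp, by aesop⟩) ?_, rfl⟩
  simp only [mem_image, mem_univ, true_and, not_exists]
  intro j hj
  obtain ⟨x, rfl⟩ := hg j
  exact filter_eq_empty_iff.mp hj (mem_univ x) rfl

theorem exists_finpartition_iff_exists_perm_s9 {M : Type*} [AddCommMonoid M] {n m : ℕ} (hn : 0 < n)
    (a : Fin (n * m) → M) (A : M) :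
    (∃ P : Finpartition (univ : Finset (Fin (n * m))),
        #P.parts = m ∧ ∀ q ∈ P.parts, #q = n ∧ ∑ i ∈ q, a i = A) ↔
      ∃ π : Equiv.Perm (Fin (n * m)),
        ∀ j : Fin m, ∑ i ∈ stepsIco (n * j) (n * j + n), a (π i) = A := by
  simp_rw [← filter_blockIdx_eq]
  constructor
  · rintro ⟨P, hcard, hparts⟩
    let e := P.parts.equivFinOfCardEq hcard
    let f : Fin (n * m) → Fin m := fun x => e ⟨P.part x, P.part_mem.2 (mem_univ x)⟩
    have hfiber : ∀ j, univ.filter (f · = j) = (e.symm j : Finset (Fin (n * m))) := by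
      intro j
      ext x
      simp only [mem_filter, mem_univ, true_and, f, ← P.part_eq_iff_mem (e.symm j).2,
        ← Equiv.eq_symm_apply, ← Subtype.val_inj]
    obtain ⟨π, hπ⟩ := exists_equiv_comp_eq_of_card_fiber_eq (f := blockIdx) (g := f) fun j => by
      rw [card_filter_blockIdx_eq, hfiber, (hparts _ (e.symm j).2).1]
    refine ⟨π, fun j => ?_⟩
    rw [← (hparts _ (e.symm j).2).2, ← hfiber]
    exact sum_equiv π (by simp [hπ]) fun _ _ => rfl
  · rintro ⟨π, hπ⟩
    let g : Fin (n * m) → Fin m := fun x => blockIdx (π.symm x)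
    have hfiber : ∀ j, #(univ.filter (g · = j)) = n := fun j =>
      (card_equiv π.symm (by simp [g])).trans (card_filter_blockIdx_eq j)
    have hg : Function.Surjective g := fun j => by
      obtain ⟨x, hx⟩ := card_pos.mp (by rw [hfiber j]; exact hn : 0 < #(univ.filter (g · = j)))
      exact ⟨x, (mem_filter.mp hx).2⟩
    obtain ⟨P, hP⟩ := Finpartition.exists_parts_eq_image_fiber hg
    refine ⟨P, ?_, ?_⟩
    · rw [hP, card_image_of_injective, card_univ, Fintype.card_fin]
      intro j j' h
      obtain ⟨x, rfl⟩ := hg j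
      have hx : x ∈ univ.filter (g · = g x) := mem_filter.mpr ⟨mem_univ x, rfl⟩
      rw [show univ.filter (g · = g x) = univ.filter (g · = j') from h] at hx
      exact (mem_filter.mp hx).2
    · simp only [hP, mem_image, mem_univ, true_and, forall_exists_index, forall_apply_eq_imp_iff]
      refine fun j => ⟨hfiber j, ?_⟩
      rw [← hπ j]
      exact (sum_equiv π (by simp [g]) fun _ _ => rfl).symm

theorem toR_add_s9 (x y : ℤ × ℤ) : toR (x + y) = toR x + toR y := by
  simp [toR]

theorem eq_of_norm_toR_sub_toR_lt_one {x y : ℤ × ℤ} (h : ‖toR x - toR y‖ < 1) : x = y := by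
  have key : ∀ u v : ℤ, ‖(u : ℝ) - v‖ < 1 → u = v := fun u v huv => by
    rw [← Int.cast_sub, Real.norm_eq_abs, ← Int.cast_abs, ← Int.cast_one, Int.cast_lt,
      Int.abs_lt_one_iff, sub_eq_zero] at huv
    exact huv
  rw [Prod.norm_def, max_lt_iff] at h
  exact Prod.ext (key _ _ h.1) (key _ _ h.2)

section Axes

variable {R ι : Type*} [Ring R] [Nontrivial R] [DecidableEq R]
  {T : Finset ι} {c : ι → R} {o : ι → R × R}

theorem sum_filter_eq_of_sum_smul_eq (ho : ∀ i ∈ T, o i = (1, 0) ∨ o i = (0, 1)) {x : R}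
    {e : R × R} (he : e = (1, 0) ∨ e = (0, 1)) (h : ∑ i ∈ T, c i • o i = x • e) :
    ∑ i ∈ T with o i = e, c i = x := by
  rw [sum_filter]
  rcases he with rfl | rfl <;>
  [have h' := congrArg Prod.fst h; have h' := congrArg Prod.snd h] <;>
  · simp only [Prod.fst_sum, Prod.snd_sum, Prod.smul_fst, Prod.smul_snd, smul_eq_mul, mul_one] at h'
    rw [← h']
    refine sum_congr rfl fun i hi => ?_
    rcases ho i hi with hoi | hoi <;> simp [hoi]

end Axes

def zigzag (A : ℤ) (j : ℕ) : ℤ × ℤ := (((j / 2 : ℕ) : ℤ) * A, (((j + 1) / 2 % 2 : ℕ) : ℤ) * A)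

def zigzagSign (j : ℕ) : ℤ := if j % 4 = 2 then -1 else 1

def zigzagDir (j : ℕ) : ℤ × ℤ := if j % 2 = 0 then (0, 1) else (1, 0)

@[simp]
theorem zigzag_zero (A : ℤ) : zigzag A 0 = 0 := by
  simp [zigzag]

theorem zigzagSign_eq (j : ℕ) : zigzagSign j = 1 ∨ zigzagSign j = -1 := by
  unfold zigzagSign; split_ifs <;> simp

theorem zigzagDir_eq (j : ℕ) : zigzagDir j = (1, 0) ∨ zigzagDir j = (0, 1) := by
  unfold zigzagDir; split_ifs <;> simp

theorem zigzag_succ (A : ℤ) (j : ℕ) :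
    zigzag A (j + 1) = zigzag A j + (zigzagSign j * A) • zigzagDir j := by
  rcases (by omega : j % 4 = 0 ∨ j % 4 = 1 ∨ j % 4 = 2 ∨ j % 4 = 3) with h | h | h | h
  · rw [zigzag, zigzag, show (j + 1 + 1) / 2 % 2 = 1 by omega, show (j + 1) / 2 % 2 = 0 by omega,
      show (j + 1) / 2 = j / 2 by omega]
    simp [zigzagSign, zigzagDir, h, show j % 2 = 0 by omega]
  · rw [zigzag, zigzag, show (j + 1 + 1) / 2 % 2 = 1 by omega, show (j + 1) / 2 % 2 = 1 by omega,
      show (j + 1) / 2 = j / 2 + 1 by omega]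
    simp [zigzagSign, zigzagDir, h, show j % 2 = 1 by omega, add_mul]
  · rw [zigzag, zigzag, show (j + 1 + 1) / 2 % 2 = 0 by omega, show (j + 1) / 2 % 2 = 1 by omega,
      show (j + 1) / 2 = j / 2 by omega]
    simp [zigzagSign, zigzagDir, h, show j % 2 = 0 by omega]
  · rw [zigzag, zigzag, show (j + 1 + 1) / 2 % 2 = 0 by omega, show (j + 1) / 2 % 2 = 0 by omega,
      show (j + 1) / 2 = j / 2 + 1 by omega]
    simp [zigzagSign, zigzagDir, h, show j % 2 = 1 by omega, add_mul]

section Blocks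

variable {ι R : Type*} [CommRing R] [LinearOrder R] [IsStrictOrderedRing R] [DecidableEq R]
  {T : Finset ι} {c : ι → R} {o : ι → R × R} {A s : R} {e : R × R}

theorem two_lt_card_and_sum_abs_of_sum_smul_eq (hA : 0 < A) (hc : ∀ i ∈ T, 2 * |c i| < A)
    (ho : ∀ i ∈ T, o i = (1, 0) ∨ o i = (0, 1)) (hs : s = 1 ∨ s = -1)
    (he : e = (1, 0) ∨ e = (0, 1)) (h : ∑ i ∈ T, c i • o i = (s * A) • e) :
    2 < #T ∧ (#T = 3 → ∑ i ∈ T, |c i| = A) := by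
  have hsA : |s * A| = A := by rcases hs with rfl | rfl <;> simp [abs_of_pos hA]
  have hU := sum_filter_eq_of_sum_smul_eq ho he h
  have hU2 : 2 < #(T.filter (o · = e)) :=
    two_lt_card_of_le_abs_sum hA (fun i hi => hc i (mem_of_mem_filter i hi)) (by rw [hU, hsA])
  refine ⟨hU2.trans_le (card_le_card (filter_subset _ _)), fun hT => ?_⟩
  have hUT : T.filter (o · = e) = T := eq_of_subset_of_card_le (filter_subset _ _) (by omega)
  rw [hUT] at hU
  rw [sum_abs_eq_of_card_eq_three hT (by rwa [hU, hsA]), hU, hsA]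

end Blocks

section Path

theorem prefixSum_eq_of_norm_sub_lt_one {N m : ℕ} {v : Fin N → ℤ × ℤ} {q : ℕ → ℤ × ℤ}
    {k : Fin (m + 1) → ℕ} (hq0 : q 0 = 0) (hk0 : k 0 = 0) (hklast : k (Fin.last m) = N)
    (hend : toR (prefixSum v N) = toR (q m))
    (hnear : ∀ j : Fin (m + 1), (j : ℕ) ≠ 0 → (j : ℕ) ≠ m →
      ‖toR (prefixSum v (k j)) - toR (q j)‖ < 1)
    (j : Fin (m + 1)) : prefixSum v (k j) = q j := by
  by_cases hj0 : (j : ℕ) = 0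
  · rw [show j = 0 from Fin.ext hj0, hk0, prefixSum_zero, Fin.val_zero, hq0]
  by_cases hjm : (j : ℕ) = m
  · rw [show j = Fin.last m from Fin.ext hjm, hklast, Fin.val_last]
    exact eq_of_norm_toR_sub_toR_lt_one (by simp [hend])
  · exact eq_of_norm_toR_sub_toR_lt_one (hnear j hj0 hjm)

theorem prefixSum_zigzag_steps {n m : ℕ} {a : Fin (n * m) → ℤ} {A : ℤ}
    {π : Equiv.Perm (Fin (n * m))}
    (hπ : ∀ j : Fin m, ∑ i ∈ stepsIco (n * j) (n * j + n), a (π i) = A) {j : ℕ} (hj : j ≤ m) :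
    prefixSum (fun i => (zigzagSign (i / n) * a (π i)) • zigzagDir (i / n)) (n * j) =
      zigzag A j := by
  induction j with
  | zero => simp
  | succ j ih =>
    rw [← prefixSum_add_sum_stepsIco _ (Nat.mul_le_mul_left n j.le_succ), ih (by omega),
      zigzag_succ, Nat.mul_succ]
    congr 1
    have hdiv : ∀ i ∈ (stepsIco (n * j) (n * j + n) : Finset (Fin (n * m))), (i : ℕ) / n = j :=
      fun i hi => by
        simp only [stepsIco, mem_filter, mem_univ, true_and] at hi
        exact Nat.div_eq_of_lt_le (by linarith) (by linarith)
    rw [sum_congr rfl fun i hi => by rw [hdiv i hi], ← sum_smul, ← mul_sum, hπ ⟨j, by omega⟩]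

variable {m : ℕ} {A : ℤ} {a : Fin (3 * m) → ℤ} {π : Equiv.Perm (Fin (3 * m))}
  {ε : Fin (3 * m) → ℤ} {o : Fin (3 * m) → ℤ × ℤ}

theorem sum_stepsIco_eq_of_path (hA : 0 < A) (hpos : ∀ i, 0 < a i) (ha2 : ∀ i, 2 * a i < A)
    (hε : ∀ i, ε i = 1 ∨ ε i = -1) (ho : ∀ i, o i = (1, 0) ∨ o i = (0, 1))
    {k : Fin (m + 1) → ℕ} (hk : Monotone k) (hklast : k (Fin.last m) = 3 * m)
    (hturn : ∀ j, prefixSum (fun i => (ε i * a (π i)) • o i) (k j) = zigzag A j) (j : Fin m) :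
    ∑ i ∈ stepsIco (3 * j) (3 * j + 3), a (π i) = A := by
  have habs : ∀ i, |ε i * a (π i)| = a (π i) := fun i => by
    rcases hε i with h | h <;> simp [h, abs_of_pos (hpos (π i))]
  have hc : ∀ i, 2 * |ε i * a (π i)| < A := fun i => by rw [habs]; exact ha2 (π i)
  have hblock : ∀ j : Fin m, 2 < #(stepsIco (k j.castSucc) (k j.succ) : Finset (Fin (3 * m))) ∧
      (#(stepsIco (k j.castSucc) (k j.succ) : Finset (Fin (3 * m))) = 3 →
        ∑ i ∈ stepsIco (k j.castSucc) (k j.succ), a (π i) = A) := fun j => by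
    have hsum := prefixSum_add_sum_stepsIco (fun i => (ε i * a (π i)) • o i)
      (hk (Fin.castSucc_le_succ j))
    rw [hturn, hturn, Fin.val_succ, Fin.val_castSucc, zigzag_succ, add_right_inj] at hsum
    simpa only [habs] using two_lt_card_and_sum_abs_of_sum_smul_eq hA (fun i _ => hc i)
      (fun i _ => ho i) (zigzagSign_eq j) (zigzagDir_eq j) hsum
  have hsucc_le : ∀ j : Fin m, k j.succ ≤ 3 * m := fun j => hklast ▸ hk (Fin.le_last _)
  have hk3 : ∀ j, k j = 3 * j := Fin.eq_mul_of_add_le_succ hklast.le fun j => by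
    have := (hblock j).1
    rw [card_stepsIco (hsucc_le j)] at this
    omega
  have hj := (hblock j).2
  rw [hk3, hk3, Fin.val_succ, Fin.val_castSucc, card_stepsIco (hk3 j.succ ▸ hsucc_le j)] at hj
  exact hj (by omega)

end Path

theorem stmt_9_general (m : ℕ) (A : ℤ) (hA : 0 < A)
    (a : Fin (3 * m) → ℤ)
    (h4 : ∀ i, 4 * a i > A) (h2 : ∀ i, 2 * a i < A)
    (δ : ℝ) (hδ0 : 0 ≤ δ) (hδ : δ < 1 / 2)
    (p : ℕ → ℤ × ℤ)
    (hp : ∀ j, p j = (((j / 2 : ℕ) : ℤ) * A, (((j + 1) / 2 % 2 : ℕ) : ℤ) * A)) :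
    (∃ (π : Equiv.Perm (Fin (3 * m))) (ε : Fin (3 * m) → ℤ)
        (o : Fin (3 * m) → ℤ × ℤ) (k : Fin (m + 1) → ℕ) (X : ℕ → ℝ × ℝ),
      (∀ i, ε i = 1 ∨ ε i = -1) ∧
      (∀ i, o i = (1, 0) ∨ o i = (0, 1)) ∧
      (∀ t : ℕ, X t = toR (p 0) + toR (∑ i ∈ Finset.univ.filter
          (fun i : Fin (3 * m) => (i : ℕ) < t), (ε i * a (π i)) • o i)) ∧
      Monotone k ∧ k 0 = 0 ∧ k (Fin.last m) = 3 * m ∧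
      X (3 * m) = toR (p m) ∧
      (∀ j : Fin (m + 1), (j : ℕ) ≠ 0 → (j : ℕ) ≠ m →
        ‖X (k j) - toR (p (j : ℕ))‖ ≤ δ)) ↔
    (∃ P : Finpartition (Finset.univ : Finset (Fin (3 * m))),
      P.parts.card = m ∧ ∀ q ∈ P.parts, q.card = 3 ∧ ∑ i ∈ q, a i = A) := by
  obtain rfl : p = zigzag A := funext hp
  rw [exists_finpartition_iff_exists_perm_s9 three_pos]
  constructor
  · rintro ⟨π, ε, o, k, X, hε, ho, hX, hk, hk0, hklast, hend, hnear⟩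
    obtain rfl : X = fun t => toR (prefixSum (fun i => (ε i * a (π i)) • o i) t) :=
      funext fun t => by rw [hX, zigzag_zero, ← toR_add_s9, zero_add]; rfl
    have hpos : ∀ i, 0 < a i := fun i => by linarith [h4 i]
    exact ⟨π, sum_stepsIco_eq_of_path hA hpos h2 hε ho hk hklast <|
      prefixSum_eq_of_norm_sub_lt_one (zigzag_zero A) hk0 hklast hend fun j hj0 hjm =>
        (hnear j hj0 hjm).trans_lt (by linarith)⟩
  · rintro ⟨π, hπ⟩
    have hturn : ∀ j ≤ m, toR (zigzag A 0) + toR (prefixSum (fun i =>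
        (zigzagSign (i / 3) * a (π i)) • zigzagDir (i / 3)) (3 * j)) = toR (zigzag A j) :=
      fun j hj => by rw [prefixSum_zigzag_steps hπ hj, zigzag_zero, ← toR_add_s9, zero_add]
    refine ⟨π, fun i => zigzagSign (i / 3), fun i => zigzagDir (i / 3), fun j => 3 * j, _,
      fun i => zigzagSign_eq _, fun i => zigzagDir_eq _, fun t => rfl,
      fun j j' h => Nat.mul_le_mul_left 3 h, rfl, rfl, hturn m le_rfl, fun j _ _ => ?_⟩
    show ‖toR (zigzag A 0) + toR (prefixSum _ (3 * j)) - _‖ ≤ δ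
    rw [hturn j j.is_le, sub_self, norm_zero]
    exact hδ0

/-- Exact-endpoint variant of the DPA-S hardness reduction: an axis-aligned
path using each strut length `a i` exactly once, starting exactly at `p 0`,
ending exactly at `p m`, and whose intermediate nodes `X (k j)` lie in the
`δ`-boxes (`δ < 1/2`, `ℓ∞`-norm) of the turning points
`p j = (⌊j/2⌋·A, (⌈j/2⌉ mod 2)·A)` for `j = 1, …, m−1`, exists iff
`Fin (3m)` can be partitioned into `m` three-element sets each with `a`-sum
`A`. (Steps are indexed 0-based: `X t` is the node after the first `t` steps.) -/
theorem stmt_9 (m : ℕ) (hm : 0 < m) (A : ℤ) (hA : 0 < A)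
    (a : Fin (3 * m) → ℤ)
    (h4 : ∀ i, 4 * a i > A) (h2 : ∀ i, 2 * a i < A)
    (hsum : ∑ i, a i = (m : ℤ) * A)
    (δ : ℝ) (hδ0 : 0 ≤ δ) (hδ : δ < 1 / 2)
    (p : ℕ → ℤ × ℤ)
    (hp : ∀ j, p j = (((j / 2 : ℕ) : ℤ) * A, (((j + 1) / 2 % 2 : ℕ) : ℤ) * A)) :
    (∃ (π : Equiv.Perm (Fin (3 * m))) (ε : Fin (3 * m) → ℤ)
        (o : Fin (3 * m) → ℤ × ℤ) (k : Fin (m + 1) → ℕ) (X : ℕ → ℝ × ℝ),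
      (∀ i, ε i = 1 ∨ ε i = -1) ∧
      (∀ i, o i = (1, 0) ∨ o i = (0, 1)) ∧
      (∀ t : ℕ, X t = toR (p 0) + toR (∑ i ∈ Finset.univ.filter
          (fun i : Fin (3 * m) => (i : ℕ) < t), (ε i * a (π i)) • o i)) ∧
      Monotone k ∧ k 0 = 0 ∧ k (Fin.last m) = 3 * m ∧
      X (3 * m) = toR (p m) ∧
      (∀ j : Fin (m + 1), (j : ℕ) ≠ 0 → (j : ℕ) ≠ m →
        ‖X (k j) - toR (p (j : ℕ))‖ ≤ δ)) ↔
    (∃ P : Finpartition (Finset.univ : Finset (Fin (3 * m))),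
      P.parts.card = m ∧ ∀ q ∈ P.parts, q.card = 3 ∧ ∑ i ∈ q, a i = A) :=
  stmt_9_general m A hA a h4 h2 δ hδ0 hδ p hp
end
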